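/- arXiv:1910.06696 — 2 statements merged into one kernel-verified Lean document; each statement's English description precedes it below -/
import Mathlib

section
/- In a Lorentzian vector space, suppose a symmetric bilinear form Ric satisfies Ric(X, X) ≥ 0 for all lightlike vectors X, that T is timelike with Ric(T, Y) = λ·ḡ(T, Y) for all Y (T is an eigenvector of Ric), and ν is a future timelike unit vector with u = ḡ(T, ν) > 0 and ḡ(T,T) = −ϑ² < 0. Then Ric(ν, T_‖) ≥ 0, where T_‖ = T + u·ν is the projection of T onto the orthogonal complement of ν. If moreover Ric(X,X) > 0 for all nonzero lightlike X and Ric(ν, T_‖) = 0, then T_‖ = 0, i.e., T is parallel to ν. -/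
/-!
Let `w = T + u ν` be the component of `T` orthogonal to `ν`. Since `ν^⊥` is spacelike, `s = √g(w,w)`
makes `X = s ν + w` a null vector. Writing `T = w - u ν`, the eigenvector equations
`Ric(T, ν) = λ u` and `Ric(T, w) = λ g(w,w)` eliminate `Ric(ν,ν)` and `Ric(w,w)` from `Ric(X,X)`, leaving
`u · Ric(X,X) = (s + u)² · Ric(ν, w)`. The null convergence condition and `u > 0` give the sign of
`Ric(ν, w)`; in the strict case `Ric(ν, w) = 0` forces `X = 0`, hence `w = 0`.
-/

namespace LinearMap.BilinForm

variable {R V : Type*} [CommRing R] [AddCommGroup V] [Module R V] {g : LinearMap.BilinForm R V}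
  {ν : V}

theorem apply_add_smul_eq_zero (hgsymm : ∀ x y, g x y = g y x) (hν : g ν ν = -1) {T : V} {u : R}
    (hu : g T ν = u) : g ν (T + u • ν) = 0 := by
  simp [hgsymm ν T, hu, hν]

theorem apply_smul_add_self_eq_zero (hgsymm : ∀ x y, g x y = g y x) (hν : g ν ν = -1) {w : V}
    (hw : g ν w = 0) {s : R} (hs : s * s = g w w) : g (s • ν + w) (s • ν + w) = 0 := by
  simp [hν, hw, hgsymm w ν, ← hs]

theorem eq_zero_of_smul_add_eq_zero (hν : g ν ν = -1) {w : V} (hw : g ν w = 0) {s : R}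
    (h : s • ν + w = 0) : w = 0 := by
  have hs : s = 0 := by simpa [hν, hw] using congrArg (g ν) h
  simpa [hs] using h

theorem mul_apply_smul_add_self_eq {Ric : LinearMap.BilinForm R V}
    (hgsymm : ∀ x y, g x y = g y x) (hRicsymm : ∀ x y, Ric x y = Ric y x) (hν : g ν ν = -1)
    {T : V} {lam u s : R} (heig : ∀ Y : V, Ric T Y = lam * g T Y) (hu : g T ν = u)
    (hs : s * s = g (T + u • ν) (T + u • ν)) :
    u * Ric (s • ν + (T + u • ν)) (s • ν + (T + u • ν)) = (s + u) ^ 2 * Ric ν (T + u • ν) := by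
  set w := T + u • ν
  have hw : g ν w = 0 := apply_add_smul_eq_zero hgsymm hν hu
  have hT : T = w - u • ν := by simp [w]
  have hTν : Ric w ν - u * Ric ν ν = lam * u := by
    simpa [hT, hRicsymm w ν, hw, hν, hgsymm w ν] using heig ν
  have hTw : Ric w w - u * Ric ν w = lam * g w w := by
    simpa [hT, hw] using heig w
  simp only [map_add, map_smul, LinearMap.add_apply, LinearMap.smul_apply, smul_eq_mul,
    hRicsymm w ν] at hTν hTw ⊢
  linear_combination (-(s * s)) * hTν + u * hTw - (lam * u) * hs

end LinearMap.BilinForm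

open LinearMap.BilinForm in
theorem stmt_5_general {V : Type*} [AddCommGroup V] [Module ℝ V]
    (g Ric : LinearMap.BilinForm ℝ V)
    (hgsymm : ∀ x y, g x y = g y x) (hRicsymm : ∀ x y, Ric x y = Ric y x)
    (ν : V) (hν : g ν ν = -1)
    (hLorentz : ∀ w : V, g ν w = 0 → w ≠ 0 → 0 < g w w)
    (T : V) (ϑ : ℝ) (hϑ : 0 < ϑ)
    (lam : ℝ) (heig : ∀ Y : V, Ric T Y = lam * g T Y)
    (u : ℝ) (hu : g T ν = u) (huϑ : ϑ ≤ u)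
    (hNCC : ∀ X : V, g X X = 0 → 0 ≤ Ric X X) :
    0 ≤ Ric ν (T + u • ν) ∧
      ((∀ X : V, X ≠ 0 → g X X = 0 → 0 < Ric X X) →
        Ric ν (T + u • ν) = 0 → T + u • ν = 0) := by
  set w := T + u • ν
  have hw : g ν w = 0 := apply_add_smul_eq_zero hgsymm hν hu
  have hww : 0 ≤ g w w := by
    rcases eq_or_ne w 0 with h | h
    · simp [h]
    · exact (hLorentz w hw h).le
  set s := √(g w w)
  have hs : s * s = g w w := Real.mul_self_sqrt hww
  have hnull := apply_smul_add_self_eq_zero hgsymm hν hw hs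
  have hkey : u * Ric (s • ν + w) (s • ν + w) = (s + u) ^ 2 * Ric ν w :=
    mul_apply_smul_add_self_eq hgsymm hRicsymm hν heig hu hs
  have hu0 : 0 < u := hϑ.trans_le huϑ
  have hsu : 0 < (s + u) ^ 2 := by positivity
  refine ⟨?_, fun hstrict hB ↦ ?_⟩
  · have : 0 ≤ (s + u) ^ 2 * Ric ν w := hkey ▸ mul_nonneg hu0.le (hNCC _ hnull)
    exact nonneg_of_mul_nonneg_right this hsu
  · have hX : s • ν + w = 0 := by
      by_contra hX
      have := mul_pos hu0 (hstrict _ hX hnull)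
      rw [hkey, hB, mul_zero] at this
      exact this.false
    exact eq_zero_of_smul_add_eq_zero hν hw hX

/-- Null convergence condition implies `Ric(ν, T_‖) ≥ 0` for an eigenvector `T` of `Ric`;
under the strict null convergence condition, `Ric(ν, T_‖) = 0` forces `T_‖ = 0`. -/
theorem stmt_5 {V : Type*} [AddCommGroup V] [Module ℝ V] [FiniteDimensional ℝ V]
    (hdim : 3 ≤ Module.finrank ℝ V)
    (g Ric : LinearMap.BilinForm ℝ V)
    (hgsymm : ∀ x y, g x y = g y x) (hRicsymm : ∀ x y, Ric x y = Ric y x)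
    (ν : V) (hν : g ν ν = -1)
    (hLorentz : ∀ w : V, g ν w = 0 → w ≠ 0 → 0 < g w w)
    (T : V) (ϑ : ℝ) (hϑ : 0 < ϑ) (hT : g T T = -ϑ ^ 2)
    (lam : ℝ) (heig : ∀ Y : V, Ric T Y = lam * g T Y)
    (u : ℝ) (hu : g T ν = u) (huϑ : ϑ ≤ u)
    (hNCC : ∀ X : V, g X X = 0 → 0 ≤ Ric X X) :
    0 ≤ Ric ν (T + u • ν) ∧
      ((∀ X : V, X ≠ 0 → g X X = 0 → 0 < Ric X X) →
        Ric ν (T + u • ν) = 0 → T + u • ν = 0) :=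
  stmt_5_general g Ric hgsymm hRicsymm ν hν hLorentz T ϑ hϑ lam heig u hu huϑ hNCC
end

section
/- Suppose f : [0, ∞) × K → ℝ is continuous on a compact set K, satisfies the strong maximum principle in the sense that the oscillation osc f(t, ·) = max_x f(t,x) − min_x f(t,x) is strictly decreasing in t unless f(t, ·) is constant, and suppose translates f_i(t, x) = f(t + i, x) converge uniformly on [0, T] × K to a limit f_∞ also satisfying this principle. If osc f(t, ·) → ω_∞ as t → ∞, then osc f_∞(t, ·) = ω_∞ for all t ∈ [0, T]; consequently, if ω_∞ > 0, f_∞ is non-constant with constant positive oscillation, contradicting strict decrease, so ω_∞ = 0. -/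
/-!
Since `sup` and `inf` move by at most `ε` under a perturbation of size `ε` in the sup norm,
uniform convergence of the translates gives `osc f (t + i) → osc f_∞ t`, while the hypothesis
gives `osc f (t + i) → ω_∞`; hence `osc f_∞ ≡ ω_∞` on `[0, T]`. Equal oscillations at the
times `0 < T` make `f_∞(0, ·)` constant by the strong maximum principle, so
`ω_∞ = osc f_∞ 0 = 0`.
-/

open Filter Set Topology

variable {K : Type*} [TopologicalSpace K] [CompactSpace K] [Nonempty K]

/-- The spatial oscillation of `f(t,·)`. -/
noncomputable def osc (f : ℝ → K → ℝ) (t : ℝ) : ℝ := (⨆ x, f t x) - ⨅ x, f t x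

/-- Strong maximum principle on the time set `S`: if the oscillation agrees at two
distinct times of `S`, then `f(t,·)` is constant for all `t ∈ S`. -/
def SMP (f : ℝ → K → ℝ) (S : Set ℝ) : Prop :=
  ∀ t₁ ∈ S, ∀ t₂ ∈ S, t₁ < t₂ → osc f t₁ = osc f t₂ → ∀ t ∈ S, ∀ x y : K, f t x = f t y

section Bounds

variable {ι α : Type*} [Nonempty α]

lemma ciSup_le_ciSup_add {g h : α → ℝ} (hh : BddAbove (range h)) {ε : ℝ}
    (hgh : ∀ x, g x ≤ h x + ε) : ⨆ x, g x ≤ (⨆ x, h x) + ε :=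
  ciSup_le fun x => (hgh x).trans (add_le_add_left (le_ciSup hh x) ε)

lemma ciInf_le_ciInf_add {g h : α → ℝ} (hg : BddBelow (range g)) {ε : ℝ}
    (hgh : ∀ x, g x ≤ h x + ε) : ⨅ x, g x ≤ (⨅ x, h x) + ε :=
  sub_le_iff_le_add.1 <| le_ciInf fun x => sub_le_iff_le_add.2 <| (ciInf_le hg x).trans (hgh x)

lemma TendstoUniformly.tendsto_ciSup {l : Filter ι} {F : ι → α → ℝ} {G : α → ℝ}
    (hF : ∀ n, BddAbove (range (F n))) (hG : BddAbove (range G)) (h : TendstoUniformly F G l) :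
    Tendsto (fun n => ⨆ x, F n x) l (𝓝 (⨆ x, G x)) := by
  refine Metric.tendsto_nhds.2 fun ε hε => ?_
  filter_upwards [Metric.tendstoUniformly_iff.1 h (ε / 2) (half_pos hε)] with n hn
  have hclose : ∀ x, |F n x - G x| ≤ ε / 2 := fun x => by
    simpa [Real.dist_eq, abs_sub_comm] using (hn x).le
  have h₁ := ciSup_le_ciSup_add hG fun x => sub_le_iff_le_add'.1 (abs_le.1 (hclose x)).2
  have h₂ := ciSup_le_ciSup_add (g := G) (hF n) (ε := ε / 2) fun x => by
    linarith [(abs_le.1 (hclose x)).1]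
  rw [Real.dist_eq, abs_sub_lt_iff]
  constructor <;> linarith

lemma TendstoUniformly.tendsto_ciInf {l : Filter ι} {F : ι → α → ℝ} {G : α → ℝ}
    (hF : ∀ n, BddBelow (range (F n))) (hG : BddBelow (range G)) (h : TendstoUniformly F G l) :
    Tendsto (fun n => ⨅ x, F n x) l (𝓝 (⨅ x, G x)) := by
  refine Metric.tendsto_nhds.2 fun ε hε => ?_
  filter_upwards [Metric.tendstoUniformly_iff.1 h (ε / 2) (half_pos hε)] with n hn
  have hclose : ∀ x, |F n x - G x| ≤ ε / 2 := fun x => by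
    simpa [Real.dist_eq, abs_sub_comm] using (hn x).le
  have h₁ := ciInf_le_ciInf_add (hF n) fun x => sub_le_iff_le_add'.1 (abs_le.1 (hclose x)).2
  have h₂ := ciInf_le_ciInf_add (h := F n) hG (ε := ε / 2) fun x => by
    linarith [(abs_le.1 (hclose x)).1]
  rw [Real.dist_eq, abs_sub_lt_iff]
  constructor <;> linarith

lemma osc_eq_zero_of_forall_eq {f : ℝ → α → ℝ} {t : ℝ} (h : ∀ x y, f t x = f t y) :
    osc f t = 0 := by
  obtain ⟨x₀⟩ := ‹Nonempty α›
  have hconst : f t = fun _ => f t x₀ := funext fun x => h x x₀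
  rw [osc, hconst, ciSup_const, ciInf_const, sub_self]

end Bounds

lemma tendsto_osc_translate {f g : ℝ → K → ℝ} {S : Set ℝ}
    (hf : Continuous (Function.uncurry f)) (hg : Continuous (Function.uncurry g))
    (hconv : TendstoUniformlyOn (fun (i : ℕ) (p : ℝ × K) => f (p.1 + i) p.2)
      (fun p => g p.1 p.2) atTop (S ×ˢ (univ : Set K)))
    {t : ℝ} (ht : t ∈ S) :
    Tendsto (fun i : ℕ => osc f (t + i)) atTop (𝓝 (osc g t)) := by
  have hslice : TendstoUniformly (fun (i : ℕ) x => f (t + i) x) (g t) atTop := by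
    rw [← tendstoUniformlyOn_univ]
    simpa [Function.comp_def, ht] using hconv.comp (fun x : K => (t, x))
  have hcont : ∀ s, Continuous (f s) := fun s => hf.comp (Continuous.prodMk_right s)
  have hgt : Continuous (g t) := hg.comp (Continuous.prodMk_right t)
  exact (hslice.tendsto_ciSup (fun i => (isCompact_range (hcont _)).bddAbove)
      (isCompact_range hgt).bddAbove).sub
    (hslice.tendsto_ciInf (fun i => (isCompact_range (hcont _)).bddBelow)
      (isCompact_range hgt).bddBelow)

theorem stmt_8_general (T : ℝ) (hT : 0 < T) (f f_inf : ℝ → K → ℝ)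
    (hf : Continuous (Function.uncurry f)) (hf_inf : Continuous (Function.uncurry f_inf))
    (hSMPinf : SMP f_inf (Set.Icc 0 T))
    (hconv : TendstoUniformlyOn (fun (i : ℕ) (p : ℝ × K) => f (p.1 + i) p.2)
      (fun p => f_inf p.1 p.2) atTop (Set.Icc 0 T ×ˢ (Set.univ : Set K)))
    (ω_inf : ℝ) (hosc : Tendsto (fun t => osc f t) atTop (nhds ω_inf)) :
    (∀ t ∈ Set.Icc 0 T, osc f_inf t = ω_inf) ∧ ω_inf = 0 := by
  have hlimit : ∀ t ∈ Icc 0 T, osc f_inf t = ω_inf := fun t ht =>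
    tendsto_nhds_unique (tendsto_osc_translate hf hf_inf hconv ht)
      (hosc.comp (tendsto_atTop_add_const_left _ t tendsto_natCast_atTop_atTop))
  refine ⟨hlimit, ?_⟩
  have h0 : (0 : ℝ) ∈ Icc 0 T := left_mem_Icc.2 hT.le
  have hT' : T ∈ Icc 0 T := right_mem_Icc.2 hT.le
  have hconst := hSMPinf 0 h0 T hT' hT ((hlimit 0 h0).trans (hlimit T hT').symm) 0 h0
  rw [← hlimit 0 h0, osc_eq_zero_of_forall_eq hconst]

/-- If `f` satisfies the strong maximum principle, its translates converge uniformly on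
`[0,T] × K` to `f_∞` which also satisfies it, and `osc f(t,·) → ω_∞`, then
`osc f_∞(t,·) = ω_∞` on `[0,T]` and consequently `ω_∞ = 0`. -/
theorem stmt_8 (T : ℝ) (hT : 0 < T) (f f_inf : ℝ → K → ℝ)
    (hf : Continuous (Function.uncurry f)) (hf_inf : Continuous (Function.uncurry f_inf))
    (hSMPf : SMP f (Set.Ici 0)) (hSMPinf : SMP f_inf (Set.Icc 0 T))
    (hconv : TendstoUniformlyOn (fun (i : ℕ) (p : ℝ × K) => f (p.1 + i) p.2)
      (fun p => f_inf p.1 p.2) atTop (Set.Icc 0 T ×ˢ (Set.univ : Set K)))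
    (ω_inf : ℝ) (hosc : Tendsto (fun t => osc f t) atTop (nhds ω_inf)) :
    (∀ t ∈ Set.Icc 0 T, osc f_inf t = ω_inf) ∧ ω_inf = 0 :=
  stmt_8_general T hT f f_inf hf hf_inf hSMPinf hconv ω_inf hosc
end
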